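/- arXiv:1901.11371 — 8 statements merged into one kernel-verified Lean document; each statement's English description precedes it below -/
import Mathlib

section
/- Let A be an m×n complex matrix, s : Fin l → Fin m a selection of rows with rank (A.submatrix s id) = rank A, and q : Fin k → Fin n a selection of columns. Suppose V is a k×n complex matrix such that the row-restricted matrix satisfies A.submatrix s id = (A.submatrix s q) * V. Then A = (A.submatrix id q) * V; that is, a column interpolative decomposition computed only from the selected rows s is automatically a column interpolative decomposition of the full matrix A. -/
/-! Since the selected rows have full rank, they span the whole row space, so `A = X * A.submatrix s id`
for some `X`. Restricting to the columns `q` gives `A.submatrix id q = X * A.submatrix s q`, hence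
`A.submatrix id q * V = X * (A.submatrix s q * V) = X * A.submatrix s id = A`. -/

open Matrix Submodule Set

namespace Matrix

variable {K : Type*} [Field K] {l m n : Type*}

theorem span_row_submatrix_eq_of_rank_eq [Finite l] [Finite m] [Fintype n]
    (A : Matrix m n K) (s : l → m) (h : (A.submatrix s id).rank = A.rank) :
    span K (range (A.submatrix s id).row) = span K (range A.row) := by
  refine eq_of_le_of_finrank_eq (span_mono ?_) ?_
  · rintro _ ⟨i, rfl⟩
    exact ⟨s i, rfl⟩
  · rwa [← rank_eq_finrank_span_row, ← rank_eq_finrank_span_row]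

theorem exists_mul_eq_of_row_mem_span [Fintype l] (A : Matrix m n K) (B : Matrix l n K)
    (h : ∀ i, A.row i ∈ span K (range B.row)) : ∃ X : Matrix m l K, X * B = A := by
  simp_rw [← range_vecMulLinear, LinearMap.mem_range, vecMulLinear_apply] at h
  choose X hX using h
  exact ⟨of X, ext fun i j => congrFun (hX i) j⟩

theorem exists_mul_submatrix_eq_of_rank_eq [Fintype l] [Finite m] [Fintype n]
    (A : Matrix m n K) (s : l → m) (h : (A.submatrix s id).rank = A.rank) :
    ∃ X : Matrix m l K, X * A.submatrix s id = A := by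
  refine exists_mul_eq_of_row_mem_span A _ fun i => ?_
  rw [span_row_submatrix_eq_of_rank_eq A s h]
  exact subset_span ⟨i, rfl⟩

end Matrix

theorem column_id_from_selected_rows (m n l k : ℕ)
    (A : Matrix (Fin m) (Fin n) ℂ)
    (s : Fin l → Fin m)
    (hrank : (A.submatrix s id).rank = A.rank)
    (q : Fin k → Fin n)
    (V : Matrix (Fin k) (Fin n) ℂ)
    (hV : A.submatrix s id = (A.submatrix s q) * V) :
    A = (A.submatrix id q) * V := by
  obtain ⟨X, hX⟩ := exists_mul_submatrix_eq_of_rank_eq A s hrank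
  have hXq : X * A.submatrix s q = A.submatrix id q := congrArg (submatrix · id q) hX
  calc A = X * A.submatrix s id := hX.symm
    _ = A.submatrix id q * V := by rw [hV, ← Matrix.mul_assoc, hXq]
end

section
/- Let A be an m×n complex matrix of rank k. Then there exist an injective map q : Fin k → Fin n selecting k columns of A and a k×n complex matrix V such that A = (A.submatrix id q) * V and V.submatrix id q = 1 (the k×k identity); that is, every rank-k matrix admits an exact column interpolative decomposition in which the interpolation matrix restricted to the skeleton columns is the identity. -/
/-!
Choose columns `q` of `A` forming a basis of its column space; there are `rank A` of them. Every
column of `A` is a combination of the skeleton `B = A[:, q]`, so `A = B * V`. Restricting to the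
columns `q` gives `B * V[:, q] = B = B * 1`, and since `B` has independent columns it can be
cancelled on the left, so `V[:, q] = 1`.
-/

open Matrix

namespace Matrix

variable {m n k R : Type*}

theorem exists_eq_mul_of_span_col_le [Fintype k] [CommSemiring R]
    {A : Matrix m n R} {B : Matrix m k R}
    (h : Submodule.span R (Set.range A.col) ≤ Submodule.span R (Set.range B.col)) :
    ∃ V : Matrix k n R, A = B * V := by
  have hcol (j : n) : ∃ v, B *ᵥ v = A.col j := by
    rw [← B.range_mulVecLin] at h
    exact h (Submodule.subset_span ⟨j, rfl⟩)
  choose v hv using hcol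
  exact ⟨(of v)ᵀ, ext_col fun j => (hv j).symm⟩

theorem mul_right_injective_of_linearIndependent_col [Fintype k] [CommSemiring R]
    {B : Matrix m k R} (hB : LinearIndependent R B.col) :
    Function.Injective fun V : Matrix k n R => B * V :=
  fun _ _ h => ext_col fun j => mulVec_injective_iff.2 hB congr(($h).col j)

variable [Field R] [Fintype n]

theorem exists_linearIndependent_col_comp_span_eq (A : Matrix m n R) :
    ∃ q : Fin A.rank → n, Function.Injective q ∧ LinearIndependent R (A.col ∘ q) ∧
      Submodule.span R (Set.range (A.col ∘ q)) = Submodule.span R (Set.range A.col) := by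
  obtain ⟨κ, a, ha, hspan, hli⟩ := exists_linearIndependent' R A.col
  have : Finite κ := .of_injective a ha
  have : Fintype κ := .ofFinite κ
  have hcard : Fintype.card κ = A.rank := by
    rw [rank_eq_finrank_span_cols, ← hspan, finrank_span_eq_card hli]
  let e : Fin A.rank ≃ κ := (Fintype.equivFinOfCardEq hcard).symm
  refine ⟨a ∘ e, ha.comp e.injective, hli.comp e e.injective, ?_⟩
  rw [← hspan, ← e.surjective.range_comp (A.col ∘ a)]
  rfl

theorem exists_col_interpolative_decomposition (A : Matrix m n R) :
    ∃ q : Fin A.rank → n, Function.Injective q ∧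
      ∃ V : Matrix (Fin A.rank) n R, A = A.submatrix id q * V ∧ V.submatrix id q = 1 := by
  obtain ⟨q, hq, hli, hspan⟩ := A.exists_linearIndependent_col_comp_span_eq
  obtain ⟨V, hV⟩ := exists_eq_mul_of_span_col_le (B := A.submatrix id q) hspan.ge
  refine ⟨q, hq, V, hV, mul_right_injective_of_linearIndependent_col hli ?_⟩
  calc A.submatrix id q * V.submatrix id q = (A.submatrix id q * V).submatrix id q := rfl
    _ = A.submatrix id q * (1 : Matrix (Fin A.rank) (Fin A.rank) R) := by
      rw [← hV, Matrix.mul_one]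

end Matrix

theorem exists_column_interpolative_decomposition (m n k : ℕ)
    (A : Matrix (Fin m) (Fin n) ℂ) (hrank : A.rank = k) :
    ∃ (q : Fin k → Fin n), Function.Injective q ∧
      ∃ V : Matrix (Fin k) (Fin n) ℂ,
        A = (A.submatrix id q) * V ∧ V.submatrix id q = (1 : Matrix (Fin k) (Fin k) ℂ) := by
  subst hrank
  exact A.exists_col_interpolative_decomposition
end

section
/- Let A be an m×n complex matrix of rank k. Then there exist an injective map p : Fin k → Fin m selecting k rows of A and an m×k complex matrix U such that A = U * (A.submatrix p id) and U.submatrix p id = 1 (the k×k identity); that is, every rank-k matrix admits an exact row interpolative decomposition in which the interpolation matrix restricted to the skeleton rows is the identity. -/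
/-!
Pick rows `p` of `A` forming a basis of its row space. Every row of `A` is a combination of them,
which gives `A = U * B` with `B = A.submatrix p id`. Restricting to the rows `p` yields
`U.submatrix p id * B = B = 1 * B`, and since `B` has linearly independent rows it can be
cancelled on the right.
-/

namespace Matrix

variable {l m n R : Type*}

section CommRing

variable [CommRing R] [Fintype m]

theorem mul_left_injective_of_linearIndependent_row {B : Matrix m n R}
    (hB : LinearIndependent R B.row) : Function.Injective fun U : Matrix l m R => U * B :=
  fun U V hUV => funext fun i => vecMul_injective_iff.2 hB <| by
    simpa only [mul_apply_eq_vecMul] using congrFun hUV i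

theorem exists_eq_mul_of_span_row_le {A : Matrix l n R} {B : Matrix m n R}
    (h : Submodule.span R (Set.range A.row) ≤ Submodule.span R (Set.range B.row)) :
    ∃ U : Matrix l m R, A = U * B := by
  have hrow (i : l) : ∃ u, B.vecMulLinear u = A i := by
    rw [← LinearMap.mem_range, range_vecMulLinear]
    exact h (Submodule.subset_span ⟨i, rfl⟩)
  choose U hU using hrow
  exact ⟨of U, funext fun i => (hU i).symm⟩

end CommRing

variable [Field R] [Fintype m] [Fintype n]

theorem exists_injective_linearIndependent_row_span_eq (A : Matrix m n R) :
    ∃ p : Fin A.rank → m, Function.Injective p ∧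
      LinearIndependent R (A.submatrix p id).row ∧
      Submodule.span R (Set.range (A.submatrix p id).row) = Submodule.span R (Set.range A.row) := by
  obtain ⟨κ, a, ha_inj, ha_span, ha_li⟩ := exists_linearIndependent' R A.row
  have : Fintype κ := Fintype.ofInjective a ha_inj
  have hcard : Fintype.card κ = A.rank := by
    rw [A.rank_eq_finrank_span_row, ← ha_span, finrank_span_eq_card ha_li]
  let e : Fin A.rank ≃ κ := (Fintype.equivFinOfCardEq hcard).symm
  refine ⟨a ∘ e, ha_inj.comp e.injective, ha_li.comp e e.injective, ?_⟩
  rw [← ha_span]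
  exact congrArg _ (e.surjective.range_comp (A.row ∘ a))

theorem exists_injective_eq_mul_submatrix (A : Matrix m n R) :
    ∃ p : Fin A.rank → m, Function.Injective p ∧
      ∃ U : Matrix m (Fin A.rank) R, A = U * A.submatrix p id ∧ U.submatrix p id = 1 := by
  obtain ⟨p, hp_inj, hp_li, hp_span⟩ := A.exists_injective_linearIndependent_row_span_eq
  obtain ⟨U, hU⟩ := exists_eq_mul_of_span_row_le hp_span.ge
  refine ⟨p, hp_inj, U, hU, mul_left_injective_of_linearIndependent_row hp_li ?_⟩
  calc U.submatrix p id * A.submatrix p id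
      = (U * A.submatrix p id).submatrix p id :=
        (submatrix_mul U (A.submatrix p id) p id id Function.bijective_id).symm
    _ = (1 : Matrix (Fin A.rank) (Fin A.rank) R) * A.submatrix p id := by
        rw [← hU, Matrix.one_mul]

end Matrix

theorem exists_row_interpolative_decomposition (m n k : ℕ)
    (A : Matrix (Fin m) (Fin n) ℂ) (hrank : A.rank = k) :
    ∃ (p : Fin k → Fin m), Function.Injective p ∧
      ∃ U : Matrix (Fin m) (Fin k) ℂ,
        A = U * (A.submatrix p id) ∧ U.submatrix p id = (1 : Matrix (Fin k) (Fin k) ℂ) := by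
  subst hrank
  exact A.exists_injective_eq_mul_submatrix
end

section
/- Let f : ℝ → ℝ → ℝ, let a ≤ x and c ≤ y be real numbers, and suppose that on the rectangle [a, x] × [c, y] the partial derivative ∂f/∂s (in the first variable) exists and, for each fixed first argument, is differentiable in the second variable, with mixed partial g(s, t) = ∂²f/∂t∂s continuous on the rectangle. Then there exist ξ ∈ [a, x] and η ∈ [c, y] such that f x y - f x c - f a y + f a c = g ξ η * (x - a) * (y - c). -/
/-!
Apply the one-variable mean value theorem twice: first to `s ↦ f s y - f s c` on `[a, x]`,
which produces `ξ` with `f x y - f x c - f a y + f a c = (f₁ ξ y - f₁ ξ c) (x - a)`, then to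
`t ↦ f₁ ξ t` on `[c, y]`.
-/

open Set

theorem exists_hasDerivWithinAt_Icc_eq_slope_mul {f f' : ℝ → ℝ} {a b : ℝ} (hab : a ≤ b)
    (hf : ∀ s ∈ Icc a b, HasDerivWithinAt f (f' s) (Icc a b) s) :
    ∃ ξ ∈ Icc a b, f b - f a = f' ξ * (b - a) := by
  rcases hab.eq_or_lt with rfl | hab
  · exact ⟨a, left_mem_Icc.2 le_rfl, by ring⟩
  have hfc : ContinuousOn f (Icc a b) := fun s hs => (hf s hs).continuousWithinAt
  have hfd : ∀ s ∈ Ioo a b, HasDerivAt f (f' s) s := fun s hs =>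
    (hf s (Ioo_subset_Icc_self hs)).hasDerivAt (Icc_mem_nhds hs.1 hs.2)
  obtain ⟨ξ, hξ, hslope⟩ := exists_ratio_hasDerivAt_eq_ratio_slope f f' hab hfc hfd
    id 1 continuousOn_id fun s _ => hasDerivAt_id s
  exact ⟨ξ, Ioo_subset_Icc_self hξ, by simp only [id, Pi.one_apply] at hslope; linarith⟩

theorem mvt_second_mixed_difference_general
    (f f₁ g : ℝ → ℝ → ℝ) (a x c y : ℝ) (hax : a ≤ x) (hcy : c ≤ y)
    (hf₁ : ∀ s ∈ Set.Icc a x, ∀ t ∈ Set.Icc c y,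
      HasDerivWithinAt (fun s' => f s' t) (f₁ s t) (Set.Icc a x) s)
    (hg : ∀ s ∈ Set.Icc a x, ∀ t ∈ Set.Icc c y,
      HasDerivWithinAt (fun t' => f₁ s t') (g s t) (Set.Icc c y) t) :
    ∃ ξ ∈ Set.Icc a x, ∃ η ∈ Set.Icc c y,
      f x y - f x c - f a y + f a c = g ξ η * (x - a) * (y - c) := by
  obtain ⟨ξ, hξ, hξ_slope⟩ :=
    exists_hasDerivWithinAt_Icc_eq_slope_mul (f := fun s => f s y - f s c) hax
      fun s hs => (hf₁ s hs y (right_mem_Icc.2 hcy)).sub (hf₁ s hs c (left_mem_Icc.2 hcy))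
  obtain ⟨η, hη, hη_slope⟩ := exists_hasDerivWithinAt_Icc_eq_slope_mul hcy (hg ξ hξ)
  refine ⟨ξ, hξ, η, hη, ?_⟩
  linear_combination hξ_slope + (x - a) * hη_slope

theorem mvt_second_mixed_difference
    (f f₁ g : ℝ → ℝ → ℝ) (a x c y : ℝ) (hax : a ≤ x) (hcy : c ≤ y)
    (hf₁ : ∀ s ∈ Set.Icc a x, ∀ t ∈ Set.Icc c y,
      HasDerivWithinAt (fun s' => f s' t) (f₁ s t) (Set.Icc a x) s)
    (hg : ∀ s ∈ Set.Icc a x, ∀ t ∈ Set.Icc c y,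
      HasDerivWithinAt (fun t' => f₁ s t') (g s t) (Set.Icc c y) t)
    (hgc : ContinuousOn (fun p : ℝ × ℝ => g p.1 p.2) (Set.Icc a x ×ˢ Set.Icc c y)) :
    ∃ ξ ∈ Set.Icc a x, ∃ η ∈ Set.Icc c y,
      f x y - f x c - f a y + f a c = g ξ η * (x - a) * (y - c) :=
  mvt_second_mixed_difference_general f f₁ g a x c y hax hcy hf₁ hg
end

section
/- Let φ : ℝ → ℝ → ℝ, let a ≤ x and c ≤ y be real numbers, and suppose that on the rectangle [a, x] × [c, y] the partial derivative ∂φ/∂s (in the first variable) exists and, for each fixed first argument, is differentiable in the second variable, with mixed partial g(s, t) = ∂²φ/∂t∂s continuous on the rectangle. Define β : ℝ → ℂ by β s = exp(-I * φ s c) and γ : ℝ → ℂ by γ t = exp(-I * (φ a t - φ a c)). Then there exist ξ ∈ [a, x] and η ∈ [c, y] such that exp(-I * φ x y) = β x * exp(-I * (g ξ η * (x - a) * (y - c))) * γ y. -/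
/-!
Apply the mean value theorem twice: first in `s` to `s ↦ φ s y - φ s c`, producing `ξ` with
`φ x y - φ x c - (φ a y - φ a c) = (φ₁ ξ y - φ₁ ξ c) (x - a)`, then in `t` to `φ₁ ξ`, producing `η`
with `φ₁ ξ y - φ₁ ξ c = g ξ η (y - c)`. Exponentiating the resulting identity for the phase splits
`exp (-i φ x y)` into the three stated factors.
-/

open Complex

theorem exists_mem_Icc_sub_eq_mul_sub {f f' : ℝ → ℝ} {a b : ℝ} (hab : a ≤ b)
    (hf : ∀ s ∈ Set.Icc a b, HasDerivWithinAt f (f' s) (Set.Icc a b) s) :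
    ∃ ξ ∈ Set.Icc a b, f b - f a = f' ξ * (b - a) := by
  rcases hab.eq_or_lt with rfl | hlt
  · exact ⟨a, Set.left_mem_Icc.2 le_rfl, by ring⟩
  obtain ⟨ξ, hξ, hslope⟩ := exists_hasDerivAt_eq_slope f f' hlt
    (fun s hs => (hf s hs).continuousWithinAt)
    (fun s hs => (hf s (Set.Ioo_subset_Icc_self hs)).hasDerivAt (Icc_mem_nhds hs.1 hs.2))
  refine ⟨ξ, Set.Ioo_subset_Icc_self hξ, ?_⟩
  rw [hslope, div_mul_cancel₀ _ (sub_ne_zero.2 hlt.ne')]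

theorem exists_rectangle_sub_eq_mixedDeriv_mul {φ φ₁ g : ℝ → ℝ → ℝ} {a x c y : ℝ}
    (hax : a ≤ x) (hcy : c ≤ y)
    (hφ₁ : ∀ s ∈ Set.Icc a x, ∀ t ∈ Set.Icc c y,
      HasDerivWithinAt (fun s' => φ s' t) (φ₁ s t) (Set.Icc a x) s)
    (hg : ∀ s ∈ Set.Icc a x, ∀ t ∈ Set.Icc c y,
      HasDerivWithinAt (fun t' => φ₁ s t') (g s t) (Set.Icc c y) t) :
    ∃ ξ ∈ Set.Icc a x, ∃ η ∈ Set.Icc c y,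
      φ x y - φ x c - (φ a y - φ a c) = g ξ η * (x - a) * (y - c) := by
  have hc : c ∈ Set.Icc c y := Set.left_mem_Icc.2 hcy
  have hy : y ∈ Set.Icc c y := Set.right_mem_Icc.2 hcy
  obtain ⟨ξ, hξ, hs⟩ := exists_mem_Icc_sub_eq_mul_sub (f := fun s => φ s y - φ s c) hax
    fun s hs => (hφ₁ s hs y hy).sub (hφ₁ s hs c hc)
  obtain ⟨η, hη, ht⟩ := exists_mem_Icc_sub_eq_mul_sub hcy (hg ξ hξ)
  refine ⟨ξ, hξ, η, hη, ?_⟩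
  linear_combination hs + (x - a) * ht

theorem oscillatory_phase_separation_general
    (φ φ₁ g : ℝ → ℝ → ℝ) (a x c y : ℝ) (hax : a ≤ x) (hcy : c ≤ y)
    (hφ₁ : ∀ s ∈ Set.Icc a x, ∀ t ∈ Set.Icc c y,
      HasDerivWithinAt (fun s' => φ s' t) (φ₁ s t) (Set.Icc a x) s)
    (hg : ∀ s ∈ Set.Icc a x, ∀ t ∈ Set.Icc c y,
      HasDerivWithinAt (fun t' => φ₁ s t') (g s t) (Set.Icc c y) t)
    (β γ : ℝ → ℂ)
    (hβ : ∀ s, β s = Complex.exp (-Complex.I * (φ s c : ℝ)))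
    (hγ : ∀ t, γ t = Complex.exp (-Complex.I * ((φ a t - φ a c : ℝ)))) :
    ∃ ξ ∈ Set.Icc a x, ∃ η ∈ Set.Icc c y,
      Complex.exp (-Complex.I * (φ x y : ℝ)) =
        β x * Complex.exp (-Complex.I * ((g ξ η * (x - a) * (y - c) : ℝ))) * γ y := by
  obtain ⟨ξ, hξ, η, hη, hphase⟩ := exists_rectangle_sub_eq_mixedDeriv_mul hax hcy hφ₁ hg
  refine ⟨ξ, hξ, η, hη, ?_⟩
  have hphaseC := congrArg ((↑) : ℝ → ℂ) hphase
  push_cast at hphaseC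
  rw [hβ, hγ, ← Complex.exp_add, ← Complex.exp_add]
  congr 1
  push_cast
  linear_combination (-I) * hphaseC

theorem oscillatory_phase_separation
    (φ φ₁ g : ℝ → ℝ → ℝ) (a x c y : ℝ) (hax : a ≤ x) (hcy : c ≤ y)
    (hφ₁ : ∀ s ∈ Set.Icc a x, ∀ t ∈ Set.Icc c y,
      HasDerivWithinAt (fun s' => φ s' t) (φ₁ s t) (Set.Icc a x) s)
    (hg : ∀ s ∈ Set.Icc a x, ∀ t ∈ Set.Icc c y,
      HasDerivWithinAt (fun t' => φ₁ s t') (g s t) (Set.Icc c y) t)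
    (hgc : ContinuousOn (fun p : ℝ × ℝ => g p.1 p.2) (Set.Icc a x ×ˢ Set.Icc c y))
    (β γ : ℝ → ℂ)
    (hβ : ∀ s, β s = Complex.exp (-Complex.I * (φ s c : ℝ)))
    (hγ : ∀ t, γ t = Complex.exp (-Complex.I * ((φ a t - φ a c : ℝ)))) :
    ∃ ξ ∈ Set.Icc a x, ∃ η ∈ Set.Icc c y,
      Complex.exp (-Complex.I * (φ x y : ℝ)) =
        β x * Complex.exp (-Complex.I * ((g ξ η * (x - a) * (y - c) : ℝ))) * γ y :=
  oscillatory_phase_separation_general φ φ₁ g a x c y hax hcy hφ₁ hg β γ hβ hγ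
end

section
/- Let ρ : ℝ → EuclideanSpace ℝ (Fin 2) be differentiable with ‖deriv ρ s‖ ≤ c₂ for all s, let α : ℝ → ℝ be twice differentiable on (0, ∞), let κ > 0, and define F : ℝ → ℝ → ℝ by F x y = α (κ * ‖ρ x - ρ y‖). Then for all x, y with ρ x ≠ ρ y at which the mixed partial derivative ∂²F/∂y∂x exists, it satisfies |∂²F/∂y∂x (x, y)| ≤ κ² * c₂² * |deriv (deriv α) (κ * ‖ρ x - ρ y‖)| + 2 * κ * c₂² * |deriv α (κ * ‖ρ x - ρ y‖)| / ‖ρ x - ρ y‖. -/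
/-!
Write `v = ρ x - ρ y`, `r = ‖v‖` and `⟪v, w⟫ / r` for the component of `w` along `v`.
Differentiating in `x` gives `∂ₓF = α'(κ r) · κ ⟪v, ρ' x⟫ / r`. Differentiating this in `y`, the
factor `α'(κ r)` contributes `α''(κ r) · κ² · (component of -ρ' y) · (component of ρ' x)`, and the
component of `ρ' x` contributes `(⟪-ρ' y, ρ' x⟫ - product of the two components) / r`. Every
component is at most `c₂` by Cauchy–Schwarz, which gives the two terms of the bound.
-/

open RealInnerProductSpace

variable {E : Type*} [NormedAddCommGroup E] [InnerProductSpace ℝ E]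

noncomputable def radialComponent (v w : E) : ℝ := ⟪v, w⟫ / ‖v‖

theorem abs_radialComponent_le (v w : E) : |radialComponent v w| ≤ ‖w‖ := by
  rcases eq_or_ne v 0 with rfl | hv
  · simp [radialComponent]
  · rw [radialComponent, abs_div, abs_norm, div_le_iff₀ (norm_pos_iff.mpr hv), mul_comm]
    exact abs_real_inner_le_norm v w

section Derivatives

variable {γ : ℝ → E} {γ' : E} {t : ℝ}

theorem HasDerivAt.norm_of_ne_zero (hγ : HasDerivAt γ γ' t) (h0 : γ t ≠ 0) :
    HasDerivAt (fun s => ‖γ s‖) (radialComponent (γ t) γ') t := by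
  have hn : ‖γ t‖ ≠ 0 := norm_ne_zero_iff.mpr h0
  have h := hγ.norm_sq.sqrt (pow_ne_zero 2 hn)
  simp only [Real.sqrt_sq (norm_nonneg _)] at h
  convert h using 1
  rw [radialComponent]
  field_simp

theorem HasDerivAt.comp_norm {φ : ℝ → ℝ} {φ' κ : ℝ} (hγ : HasDerivAt γ γ' t) (h0 : γ t ≠ 0)
    (hφ : HasDerivAt φ φ' (κ * ‖γ t‖)) :
    HasDerivAt (fun s => φ (κ * ‖γ s‖)) (φ' * (κ * radialComponent (γ t) γ')) t :=
  hφ.comp t ((hγ.norm_of_ne_zero h0).const_mul κ)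

theorem HasDerivAt.radialComponent (hγ : HasDerivAt γ γ' t) (h0 : γ t ≠ 0) (w : E) :
    HasDerivAt (fun s => radialComponent (γ s) w)
      ((⟪γ', w⟫ - radialComponent (γ t) w * radialComponent (γ t) γ') / ‖γ t‖) t := by
  have hn : ‖γ t‖ ≠ 0 := norm_ne_zero_iff.mpr h0
  have hinner : HasDerivAt (fun s => ⟪γ s, w⟫) ⟪γ', w⟫ t := by
    simpa using hγ.inner ℝ (hasDerivAt_const t w)
  refine (hinner.div (hγ.norm_of_ne_zero h0) hn).congr_deriv ?_
  simp only [_root_.radialComponent]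
  field_simp

end Derivatives

section Phase

variable {ρ : ℝ → E} {α : ℝ → ℝ} {κ x y : ℝ}

theorem deriv_phase_fst {a : E} (hρ : DifferentiableAt ℝ ρ x)
    (hα : DifferentiableOn ℝ α (Set.Ioi 0)) (hκ : 0 < κ) (ha : ρ x ≠ a) :
    deriv (fun x' => α (κ * ‖ρ x' - a‖)) x =
      deriv α (κ * ‖ρ x - a‖) * (κ * radialComponent (ρ x - a) (deriv ρ x)) := by
  have h0 : ρ x - a ≠ 0 := sub_ne_zero.mpr ha
  have hpos : 0 < κ * ‖ρ x - a‖ := mul_pos hκ (norm_pos_iff.mpr h0)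
  have hαx := (hα.differentiableAt (Ioi_mem_nhds hpos)).hasDerivAt
  exact (hρ.hasDerivAt.sub_const a |>.comp_norm h0 hαx).deriv

theorem hasDerivAt_deriv_phase_fst (hρx : DifferentiableAt ℝ ρ x) (hρy : DifferentiableAt ℝ ρ y)
    (hα : DifferentiableOn ℝ α (Set.Ioi 0))
    (hα' : DifferentiableAt ℝ (deriv α) (κ * ‖ρ x - ρ y‖)) (hκ : 0 < κ) (hxy : ρ x ≠ ρ y) :
    HasDerivAt (fun y' => deriv (fun x' => α (κ * ‖ρ x' - ρ y'‖)) x)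
      (deriv (deriv α) (κ * ‖ρ x - ρ y‖) * (κ * radialComponent (ρ x - ρ y) (-deriv ρ y)) *
          (κ * radialComponent (ρ x - ρ y) (deriv ρ x)) +
        deriv α (κ * ‖ρ x - ρ y‖) *
          (κ * ((⟪-deriv ρ y, deriv ρ x⟫ - radialComponent (ρ x - ρ y) (deriv ρ x) *
            radialComponent (ρ x - ρ y) (-deriv ρ y)) / ‖ρ x - ρ y‖))) y := by
  have hγ : HasDerivAt (fun y' => ρ x - ρ y') (-deriv ρ y) y := hρy.hasDerivAt.const_sub (ρ x)
  have h0 : ρ x - ρ y ≠ 0 := sub_ne_zero.mpr hxy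
  have hfst : (fun y' => deriv (fun x' => α (κ * ‖ρ x' - ρ y'‖)) x) =ᶠ[nhds y]
      fun y' => deriv α (κ * ‖ρ x - ρ y'‖) * (κ * radialComponent (ρ x - ρ y') (deriv ρ x)) := by
    filter_upwards [hρy.continuousAt.eventually_ne hxy.symm] with y' hy'
    exact deriv_phase_fst hρx hα hκ (Ne.symm hy')
  refine HasDerivAt.congr_of_eventuallyEq ?_ hfst
  exact (hγ.comp_norm h0 hα'.hasDerivAt).mul ((hγ.radialComponent h0 (deriv ρ x)).const_mul κ)

end Phase

theorem mixed_partial_phase_bound_general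
    (ρ : ℝ → EuclideanSpace ℝ (Fin 2)) (c₂ : ℝ)
    (hρ : Differentiable ℝ ρ) (hρ' : ∀ s, ‖deriv ρ s‖ ≤ c₂)
    (α : ℝ → ℝ)
    (hα : DifferentiableOn ℝ α (Set.Ioi (0 : ℝ)))
    (hα' : DifferentiableOn ℝ (deriv α) (Set.Ioi (0 : ℝ)))
    (κ : ℝ) (hκ : 0 < κ) (x y : ℝ) (hxy : ρ x ≠ ρ y) :
    |deriv (fun y' => deriv (fun x' => α (κ * ‖ρ x' - ρ y'‖)) x) y| ≤
      κ ^ 2 * c₂ ^ 2 * |deriv (deriv α) (κ * ‖ρ x - ρ y‖)| +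
        2 * κ * c₂ ^ 2 * |deriv α (κ * ‖ρ x - ρ y‖)| / ‖ρ x - ρ y‖ := by
  have hr : 0 < ‖ρ x - ρ y‖ := norm_pos_iff.mpr (sub_ne_zero.mpr hxy)
  have hα'r := hα'.differentiableAt (Ioi_mem_nhds (mul_pos hκ hr))
  rw [(hasDerivAt_deriv_phase_fst (hρ x) (hρ y) hα hα'r hκ hxy).deriv]
  set r := ‖ρ x - ρ y‖
  have hc₂ : 0 ≤ c₂ := (norm_nonneg _).trans (hρ' x)
  set a := radialComponent (ρ x - ρ y) (deriv ρ x)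
  set b := radialComponent (ρ x - ρ y) (-deriv ρ y)
  have ha : |a| ≤ c₂ := (abs_radialComponent_le _ _).trans (hρ' x)
  have hb : |b| ≤ c₂ := (abs_radialComponent_le _ _).trans ((norm_neg _).trans_le (hρ' y))
  have hc : |⟪-deriv ρ y, deriv ρ x⟫| ≤ c₂ * c₂ :=
    (abs_real_inner_le_norm _ _).trans (by rw [norm_neg]; gcongr <;> apply hρ')
  have hcab : |⟪-deriv ρ y, deriv ρ x⟫ - a * b| ≤ 2 * c₂ ^ 2 := by
    have hab : |a * b| ≤ c₂ * c₂ := by rw [abs_mul]; gcongr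
    linarith [abs_sub (⟪-deriv ρ y, deriv ρ x⟫) (a * b)]
  calc _ ≤ |deriv (deriv α) (κ * r)| * (κ * |b|) * (κ * |a|) +
        |deriv α (κ * r)| * (κ * (|⟪-deriv ρ y, deriv ρ x⟫ - a * b| / r)) := by
        refine (abs_add_le _ _).trans_eq ?_
        simp only [abs_mul, abs_div, abs_of_pos hκ, abs_of_pos hr]
    _ ≤ |deriv (deriv α) (κ * r)| * (κ * c₂) * (κ * c₂) +
        |deriv α (κ * r)| * (κ * (2 * c₂ ^ 2 / r)) := by gcongr
    _ = _ := by ring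

theorem mixed_partial_phase_bound
    (ρ : ℝ → EuclideanSpace ℝ (Fin 2)) (c₂ : ℝ)
    (hρ : Differentiable ℝ ρ) (hρ' : ∀ s, ‖deriv ρ s‖ ≤ c₂)
    (α : ℝ → ℝ)
    (hα : DifferentiableOn ℝ α (Set.Ioi (0 : ℝ)))
    (hα' : DifferentiableOn ℝ (deriv α) (Set.Ioi (0 : ℝ)))
    (κ : ℝ) (hκ : 0 < κ) (x y : ℝ) (hxy : ρ x ≠ ρ y)
    (hmixed : DifferentiableAt ℝ
      (fun y' => deriv (fun x' => α (κ * ‖ρ x' - ρ y'‖)) x) y) :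
    |deriv (fun y' => deriv (fun x' => α (κ * ‖ρ x' - ρ y'‖)) x) y| ≤
      κ ^ 2 * c₂ ^ 2 * |deriv (deriv α) (κ * ‖ρ x - ρ y‖)| +
        2 * κ * c₂ ^ 2 * |deriv α (κ * ‖ρ x - ρ y‖)| / ‖ρ x - ρ y‖ :=
  mixed_partial_phase_bound_general ρ c₂ hρ hρ' α hα hα' κ hκ x y hxy
end

section
/- Let u : Fin m → ℝ, v : Fin n → ℝ, ω : ℝ, and c ≥ 0 be such that |ω * u i * v j| ≤ c for all i, j, and let D be the m×n complex matrix with entries D i j = Complex.exp (-Complex.I * (ω * u i * v j)). Then for every natural number r ≥ 1 there exists an m×n complex matrix B with rank B ≤ r such that ‖D i j - B i j‖ ≤ c^r * Real.exp c / r! for all i, j; explicitly, one may take B i j = ∑_{k=0}^{r-1} (-Complex.I * ω)^k * (u i)^k * (v j)^k / k!. -/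
/-!
Each Taylor term `(-iω u_i v_j)^k / k!` factors as a function of `i` times a function of `j`,
so the order-`r` truncation is a product of an `m × r` and an `r × n` matrix. The tail of the
exponential series at `z` is dominated term by term, via `k! r! ≤ (k + r)!`, by
`|z|^r / r!` times the series of `e^|z|`.
-/

open Matrix Finset

lemma Real.exp_sub_sum_range_le {t : ℝ} (ht : 0 ≤ t) (r : ℕ) :
    Real.exp t - ∑ k ∈ range r, t ^ k / k.factorial ≤ t ^ r * Real.exp t / r.factorial := by
  have hexp : HasSum (fun k => t ^ k / k.factorial) (Real.exp t) := by
    simpa [Real.exp_eq_exp_ℝ] using NormedSpace.expSeries_div_hasSum_exp t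
  have htail : HasSum (fun k => t ^ (k + r) / (k + r).factorial)
      (Real.exp t - ∑ k ∈ range r, t ^ k / k.factorial) :=
    (hasSum_nat_add_iff' r).2 hexp
  have hterm (k : ℕ) :
      t ^ (k + r) / (k + r).factorial ≤ t ^ r / r.factorial * (t ^ k / k.factorial) := by
    have hfac : (k.factorial * r.factorial : ℝ) ≤ (k + r).factorial := by
      exact_mod_cast Nat.le_of_dvd (Nat.factorial_pos _)
        (Nat.factorial_mul_factorial_dvd_factorial_add k r)
    rw [div_mul_div_comm, ← pow_add, add_comm r k, mul_comm (r.factorial : ℝ)]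
    gcongr
  calc Real.exp t - ∑ k ∈ range r, t ^ k / k.factorial
      ≤ t ^ r / r.factorial * Real.exp t := hasSum_le hterm htail (hexp.mul_left _)
    _ = t ^ r * Real.exp t / r.factorial := by ring

lemma Complex.norm_exp_sub_sum_range_le (z : ℂ) (r : ℕ) :
    ‖Complex.exp z - ∑ k ∈ range r, z ^ k / k.factorial‖
      ≤ ‖z‖ ^ r * Real.exp ‖z‖ / r.factorial :=
  (norm_exp_sub_sum_le_exp_norm_sub_sum z r).trans (Real.exp_sub_sum_range_le (norm_nonneg z) r)

lemma Matrix.rank_of_sum_range_mul_le {m n R : Type*} [Fintype n] [CommSemiring R]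
    [StrongRankCondition R] (f : ℕ → m → R) (g : ℕ → n → R) (r : ℕ) :
    (of fun i j => ∑ k ∈ range r, f k i * g k j).rank ≤ r := by
  have hfactor : (of fun i j => ∑ k ∈ range r, f k i * g k j)
      = of (fun i (k : Fin r) => f k i) * of (fun (k : Fin r) j => g k j) := by
    ext i j
    simp [mul_apply, Fin.sum_univ_eq_sum_range (fun k => f k i * g k j)]
  rw [hfactor]
  exact (rank_mul_le_left _ _).trans ((rank_le_card_width _).trans_eq (Fintype.card_fin r))

theorem oscillatory_kernel_low_rank_approx_general
    (m n : ℕ) (u : Fin m → ℝ) (v : Fin n → ℝ) (ω c : ℝ)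
    (hbound : ∀ (i : Fin m) (j : Fin n), |ω * u i * v j| ≤ c)
    (D : Matrix (Fin m) (Fin n) ℂ)
    (hD : ∀ (i : Fin m) (j : Fin n),
      D i j = Complex.exp (-Complex.I * ((ω * u i * v j : ℝ) : ℂ)))
    (r : ℕ) :
    ∃ B : Matrix (Fin m) (Fin n) ℂ,
      (∀ (i : Fin m) (j : Fin n),
        B i j = ∑ k ∈ Finset.range r,
          (-Complex.I * (ω : ℂ)) ^ k * ((u i : ℂ)) ^ k * ((v j : ℂ)) ^ k / (Nat.factorial k : ℂ)) ∧
      B.rank ≤ r ∧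
      ∀ (i : Fin m) (j : Fin n),
        ‖D i j - B i j‖ ≤ c ^ r * Real.exp c / (Nat.factorial r : ℝ) := by
  refine ⟨of fun i j => ∑ k ∈ range r,
      (-Complex.I * ω) ^ k * (u i : ℂ) ^ k * (v j : ℂ) ^ k / k.factorial,
    fun i j => rfl, ?_, ?_⟩
  · have hseparated : (of fun i j => ∑ k ∈ range r,
        (-Complex.I * ω) ^ k * (u i : ℂ) ^ k * (v j : ℂ) ^ k / k.factorial)
        = of fun i j => ∑ k ∈ range r,
          (-Complex.I * ω) ^ k * (u i : ℂ) ^ k / k.factorial * (v j : ℂ) ^ k := by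
      ext i j
      simp only [of_apply]
      exact sum_congr rfl fun k _ => by ring
    rw [hseparated]
    exact rank_of_sum_range_mul_le _ _ r
  · intro i j
    have htaylor (k : ℕ) : (-Complex.I * ω) ^ k * (u i : ℂ) ^ k * (v j : ℂ) ^ k / k.factorial
        = (-Complex.I * ((ω * u i * v j : ℝ) : ℂ)) ^ k / k.factorial := by
      push_cast; ring
    have hnorm : ‖-Complex.I * ((ω * u i * v j : ℝ) : ℂ)‖ ≤ c := by
      simpa using hbound i j
    rw [hD, of_apply, sum_congr rfl fun k _ => htaylor k]
    refine (Complex.norm_exp_sub_sum_range_le _ r).trans ?_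
    gcongr
    exact pow_nonneg ((norm_nonneg _).trans hnorm) r

theorem oscillatory_kernel_low_rank_approx
    (m n : ℕ) (u : Fin m → ℝ) (v : Fin n → ℝ) (ω c : ℝ) (hc : 0 ≤ c)
    (hbound : ∀ (i : Fin m) (j : Fin n), |ω * u i * v j| ≤ c)
    (D : Matrix (Fin m) (Fin n) ℂ)
    (hD : ∀ (i : Fin m) (j : Fin n),
      D i j = Complex.exp (-Complex.I * ((ω * u i * v j : ℝ) : ℂ)))
    (r : ℕ) (hr : 1 ≤ r) :
    ∃ B : Matrix (Fin m) (Fin n) ℂ,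
      (∀ (i : Fin m) (j : Fin n),
        B i j = ∑ k ∈ Finset.range r,
          (-Complex.I * (ω : ℂ)) ^ k * ((u i : ℂ)) ^ k * ((v j : ℂ)) ^ k / (Nat.factorial k : ℂ)) ∧
      B.rank ≤ r ∧
      ∀ (i : Fin m) (j : Fin n),
        ‖D i j - B i j‖ ≤ c ^ r * Real.exp c / (Nat.factorial r : ℝ) :=
  oscillatory_kernel_low_rank_approx_general m n u v ω c hbound D hD r
end

section
/- Let K be an m×n matrix over a field, and suppose the index rectangle Fin m × Fin n is partitioned into finitely many combinatorial rectangles: there are T pairs of sets p t ⊆ Fin m and q t ⊆ Fin n (for t in Fin T) such that every index pair (i, j) lies in exactly one product set p t × q t. Then rank K ≤ ∑_{t} rank of the submatrix of K with rows restricted to p t and columns restricted to q t. -/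
/-!
Zeroing `K` outside each rectangle `p t × q t` writes `K` as the sum of these pieces, by the
partition property. Each piece factors through the submatrix on `p t × q t` (multiply it on both
sides by 0/1 inclusion matrices), so its rank is at most that of the submatrix, and rank is
subadditive.
-/

open Matrix

namespace Matrix

variable {m n ι R : Type*}

section Restrict

variable [DecidableEq m] [DecidableEq n]

def restrictRect [Zero R] (A : Matrix m n R) (s : Finset m) (t : Finset n) : Matrix m n R :=
  of fun i j => if i ∈ s ∧ j ∈ t then A i j else 0

@[simp]
theorem restrictRect_apply [Zero R] (A : Matrix m n R) (s : Finset m) (t : Finset n) (i : m)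
    (j : n) : A.restrictRect s t i j = if i ∈ s ∧ j ∈ t then A i j else 0 :=
  rfl

theorem restrictRect_eq_mul [NonAssocSemiring R] (A : Matrix m n R) (s : Finset m)
    (t : Finset n) :
    A.restrictRect s t = (1 : Matrix m m R).submatrix id (Subtype.val : s → m) *
      A.submatrix (Subtype.val : s → m) (Subtype.val : t → n) *
        (1 : Matrix n n R).submatrix (Subtype.val : t → n) id := by
  ext i j
  simp only [restrictRect_apply, ite_and, mul_apply, Finset.univ_eq_attach, submatrix_apply,
    one_apply, id_eq, ite_mul, one_mul, zero_mul, mul_ite, mul_one, mul_zero]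
  rw [Finset.sum_attach t fun b =>
      if b = j then ∑ a ∈ s.attach, if i = ↑a then A a b else 0 else 0,
    Finset.sum_ite_eq', Finset.sum_attach s fun a => if i = a then A a j else 0,
    Finset.sum_ite_eq]
  split_ifs <;> rfl

theorem rank_restrictRect_le [CommSemiring R] [StrongRankCondition R] [Fintype n]
    (A : Matrix m n R) (s : Finset m) (t : Finset n) :
    (A.restrictRect s t).rank ≤
      (A.submatrix (Subtype.val : s → m) (Subtype.val : t → n)).rank := by
  rw [restrictRect_eq_mul]
  exact (rank_mul_le_left _ _).trans (rank_mul_le_right _ _)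

theorem sum_restrictRect_of_partition [Fintype ι] [AddCommMonoid R] (A : Matrix m n R)
    {s : ι → Finset m} {t : ι → Finset n} (h : ∀ i j, ∃! k, i ∈ s k ∧ j ∈ t k) :
    ∑ k, A.restrictRect (s k) (t k) = A := by
  ext i j
  obtain ⟨k, hk, huniq⟩ := h i j
  simp only [sum_apply, restrictRect_apply]
  rw [Fintype.sum_eq_single k fun l hl => if_neg fun hl' => hl (huniq l hl')]
  exact if_pos hk

end Restrict

theorem rank_add_le [Field R] [Fintype n] (A B : Matrix m n R) :
    (A + B).rank ≤ A.rank + B.rank := by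
  have h : LinearMap.range (A + B).mulVecLin ≤
      LinearMap.range A.mulVecLin ⊔ LinearMap.range B.mulVecLin := by
    rintro x ⟨v, rfl⟩
    rw [mulVecLin_add]
    exact Submodule.add_mem_sup (LinearMap.mem_range_self _ v) (LinearMap.mem_range_self _ v)
  exact (Submodule.finrank_mono h).trans (Submodule.finrank_add_le_finrank_add_finrank _ _)

theorem rank_sum_le [Field R] [Fintype n] (s : Finset ι) (A : ι → Matrix m n R) :
    (∑ k ∈ s, A k).rank ≤ ∑ k ∈ s, (A k).rank :=
  Finset.le_sum_of_subadditive (fun B : Matrix m n R => B.rank) rank_zero.le rank_add_le s A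

end Matrix

theorem rank_le_sum_rank_of_rectangle_partition
    {F : Type*} [Field F] (m n T : ℕ)
    (K : Matrix (Fin m) (Fin n) F)
    (p : Fin T → Finset (Fin m)) (q : Fin T → Finset (Fin n))
    (hpart : ∀ (i : Fin m) (j : Fin n), ∃! t : Fin T, i ∈ p t ∧ j ∈ q t) :
    K.rank ≤ ∑ t : Fin T,
      (K.submatrix (fun i : {a // a ∈ p t} => (i : Fin m))
        (fun j : {b // b ∈ q t} => (j : Fin n))).rank :=
  calc K.rank = (∑ t, K.restrictRect (p t) (q t)).rank := by
        rw [sum_restrictRect_of_partition K hpart]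
    _ ≤ ∑ t, (K.restrictRect (p t) (q t)).rank := rank_sum_le _ _
    _ ≤ _ := Finset.sum_le_sum fun t _ => rank_restrictRect_le K (p t) (q t)
end
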